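/- For d prime, the d+1 mutually unbiased bases {|φ_i^j⟩ : i = 1..d, j = 1..d+1} of ℂ^d form a projective 2-design, i.e. (1/(d(d+1))) Σ_{i,j} |φ_i^j⟩⟨φ_i^j|^{⊗2} = S/Tr(S), equivalently (1/2) Σ_{i,j} |φ_i^j⟩⟨φ_i^j|^{⊗2} = S, where S is the symmetric projector on ℂ^d ⊗ ℂ^d with Tr(S) = d(d+1)/2. -/

import Mathlib

open Matrix BigOperators
open scoped Kronecker ComplexConjugate

noncomputable section

def swapMat (I : Type*) [DecidableEq I] [Fintype I] : Matrix (I × I) (I × I) ℂ :=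
  fun p q => if p.1 = q.2 ∧ p.2 = q.1 then 1 else 0

def symProj (I : Type*) [DecidableEq I] [Fintype I] : Matrix (I × I) (I × I) ℂ :=
  (2⁻¹ : ℂ) • (1 + swapMat I)

def asymProj (I : Type*) [DecidableEq I] [Fintype I] : Matrix (I × I) (I × I) ℂ :=
  (2⁻¹ : ℂ) • (1 - swapMat I)

/-- reordering (1,2,3,4) ↦ (1,3,2,4) of tensor factors -/
def reorder (A B : Type*) : ((A × B) × (A × B)) ≃ ((A × A) × (B × B)) where
  toFun x := ((x.1.1, x.2.1), (x.1.2, x.2.2))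
  invFun y := ((y.1.1, y.2.1), (y.1.2, y.2.2))
  left_inv x := rfl
  right_inv y := rfl

/-- |ψ⟩⟨ψ| -/
def outer {I : Type*} (ψ : I → ℂ) : Matrix I I ℂ := fun i j => ψ i * conj (ψ j)

/-- ψ ⊗ ψ -/
def vec2 {I : Type*} (ψ : I → ℂ) : I × I → ℂ := fun p => ψ p.1 * ψ p.2

/-- |ψ⟩⟨ψ|^{⊗2} -/
def pure2 {I : Type*} (ψ : I → ℂ) : Matrix (I × I) (I × I) ℂ := outer (vec2 ψ)

def unitVec {I : Type*} [Fintype I] (ψ : I → ℂ) : Prop := ∑ i, Complex.normSq (ψ i) = 1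

/-- partial trace over the second factor -/
def ptraceB {A B : Type*} [Fintype B] (M : Matrix (A × B) (A × B) ℂ) : Matrix A A ℂ :=
  fun a a' => ∑ b, M (a, b) (a', b)

/-- reindex an operator on (ℂ^A ⊗ ℂ^B)^{⊗2} as an operator on (ℂ^A)^{⊗2} ⊗ (ℂ^B)^{⊗2} -/
def reindexAB {A B : Type*} (M : Matrix ((A × B) × (A × B)) ((A × B) × (A × B)) ℂ) :
    Matrix ((A × A) × (B × B)) ((A × A) × (B × B)) ℂ :=
  M.submatrix (reorder A B).symm (reorder A B).symm

/-- the inner product ⟨φ|χ⟩ on ℂ^d -/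
def ip {d : ℕ} (φ χ : Fin d → ℂ) : ℂ := ∑ i, conj (φ i) * χ i

/-! For unit vectors `ψₙ`, `n < N`, in `ℂ^D` put `F = ∑ₙ |ψₙ⟩⟨ψₙ|^{⊗2}` and `G = 1 + SWAP`.
Since `SWAP` fixes every `ψₙ ⊗ ψₙ`, `tr (F G) = 2 tr F = 2 N`; since `SWAP² = 1`,
`tr G² = 2 D (D + 1)`; and `tr F² = ∑ₙₘ |⟨ψₙ|ψₘ⟩|⁴` is the frame potential. For `d + 1` mutually
unbiased bases of `ℂ^d` each row of the frame potential is `1 + d · d · d⁻² = 2`, so all three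
traces equal `2 d (d + 1)`, i.e. `tr (F - G)² = 0`, and the Hermitian matrix `F - G` vanishes. -/

open scoped ComplexOrder

namespace Matrix

variable {n : Type*} [Fintype n]

theorem IsHermitian.eq_of_trace_mul_eq {F G : Matrix n n ℂ} (hF : F.IsHermitian)
    (hG : G.IsHermitian) (hFF : (F * F).trace = (F * G).trace)
    (hGG : (G * G).trace = (F * G).trace) : F = G := by
  have hFG : (F - G)ᴴ = F - G := (hF.sub hG).eq
  have : ((F - G)ᴴ * (F - G)).trace = 0 := by
    rw [hFG, sub_mul, mul_sub, mul_sub, trace_sub, trace_sub, trace_sub, trace_mul_comm G F,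
      hFF, hGG]
    ring
  exact sub_eq_zero.mp (trace_conjTranspose_mul_self_eq_zero_iff.mp this)

end Matrix

section Tensor

variable {I : Type*} [Fintype I]

omit [Fintype I] in
theorem outer_eq_vecMulVec (ψ : I → ℂ) : outer ψ = vecMulVec ψ (star ψ) := rfl

theorem trace_outer (ψ : I → ℂ) : (outer ψ).trace = star ψ ⬝ᵥ ψ := by
  rw [outer_eq_vecMulVec, trace_vecMulVec, dotProduct_comm]

theorem trace_outer_mul_outer (u v : I → ℂ) :
    (outer u * outer v).trace = ((‖star u ⬝ᵥ v‖ ^ 2 : ℝ) : ℂ) := by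
  rw [outer_eq_vecMulVec, outer_eq_vecMulVec, vecMulVec_mul_vecMulVec, trace_vecMulVec,
    dotProduct_smul, smul_eq_mul, dotProduct_star, dotProduct_comm v, Complex.star_def,
    Complex.mul_conj']
  push_cast
  rfl

omit [Fintype I] in
theorem isHermitian_outer (ψ : I → ℂ) : (outer ψ).IsHermitian := by
  rw [outer_eq_vecMulVec, IsHermitian, conjTranspose_vecMulVec, star_star]

theorem star_vec2_dotProduct_vec2 (ψ χ : I → ℂ) :
    star (vec2 ψ) ⬝ᵥ vec2 χ = (star ψ ⬝ᵥ χ) ^ 2 := by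
  simp only [dotProduct, sq, Finset.sum_mul_sum, ← Finset.sum_product', Finset.univ_product_univ]
  refine Finset.sum_congr rfl fun p _ => ?_
  simp only [vec2, Pi.star_apply, star_mul']
  ring

theorem trace_pure2 (ψ : I → ℂ) : (pure2 ψ).trace = (star ψ ⬝ᵥ ψ) ^ 2 := by
  rw [pure2, trace_outer, star_vec2_dotProduct_vec2]

theorem trace_pure2_mul_pure2 (ψ χ : I → ℂ) :
    (pure2 ψ * pure2 χ).trace = ((‖star ψ ⬝ᵥ χ‖ ^ 4 : ℝ) : ℂ) := by
  rw [pure2, pure2, trace_outer_mul_outer, star_vec2_dotProduct_vec2, norm_pow, ← pow_mul]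

omit [Fintype I] in
theorem isHermitian_pure2 (ψ : I → ℂ) : (pure2 ψ).IsHermitian := isHermitian_outer _

variable [DecidableEq I]

theorem swapMat_apply (p q : I × I) : swapMat I p q = if p.swap = q then 1 else 0 := by
  simp only [swapMat, Prod.ext_iff, Prod.fst_swap, Prod.snd_swap]
  exact if_congr (and_comm.trans (by rw [eq_comm (a := p.2)])) rfl rfl

theorem swapMat_mulVec (v : I × I → ℂ) : swapMat I *ᵥ v = fun p => v p.swap := by
  ext p
  simp [mulVec, dotProduct, swapMat_apply]

theorem swapMat_mul_swapMat : swapMat I * swapMat I = 1 := by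
  ext p q
  simp [mul_apply, swapMat_apply, one_apply, Prod.swap_eq_iff_eq_swap]

theorem trace_swapMat : (swapMat I).trace = Fintype.card I := by
  simp only [trace, diag, swapMat, Fintype.sum_prod_type, and_iff_left_of_imp Eq.symm]
  simp

theorem isHermitian_swapMat : (swapMat I).IsHermitian := by
  ext p q
  simp only [conjTranspose_apply, swapMat, apply_ite star, star_one, star_zero]
  exact if_congr ⟨fun h => ⟨h.2.symm, h.1.symm⟩, fun h => ⟨h.2.symm, h.1.symm⟩⟩ rfl rfl

theorem swapMat_mul_pure2 (ψ : I → ℂ) : swapMat I * pure2 ψ = pure2 ψ := by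
  rw [pure2, outer_eq_vecMulVec, mul_vecMulVec, swapMat_mulVec]
  congr 2
  ext p
  exact mul_comm _ _

theorem one_add_swapMat_mul_one_add_swapMat :
    (1 + swapMat I) * (1 + swapMat I) = (2 : ℂ) • (1 + swapMat I) := by
  rw [mul_add, add_mul, add_mul, swapMat_mul_swapMat, one_mul, one_mul, mul_one, two_smul]
  abel

theorem sum_pure2_eq_one_add_swapMat {ι : Type*} [Fintype ι] (ψ : ι → I → ℂ)
    (hunit : ∀ n, star (ψ n) ⬝ᵥ ψ n = 1)
    (hcard : Fintype.card ι = Fintype.card I * (Fintype.card I + 1))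
    (hpot : ∑ n, ∑ m, ‖star (ψ n) ⬝ᵥ ψ m‖ ^ 4 = 2 * Fintype.card ι) :
    ∑ n, pure2 (ψ n) = 1 + swapMat I := by
  set F := ∑ n, pure2 (ψ n)
  have htrF : F.trace = Fintype.card ι := by
    simp [F, trace_sum, trace_pure2, hunit]
  have hFG : (F * (1 + swapMat I)).trace = 2 * Fintype.card ι := by
    have hWF : swapMat I * F = F := by simp only [F, Finset.mul_sum, swapMat_mul_pure2]
    rw [trace_mul_comm, add_mul, one_mul, hWF, trace_add, htrF]
    ring
  apply Matrix.IsHermitian.eq_of_trace_mul_eq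
  · exact isSelfAdjoint_sum _ fun n _ => isHermitian_pure2 (ψ n)
  · exact isHermitian_one.add isHermitian_swapMat
  · rw [hFG, Finset.sum_mul_sum, trace_sum]
    simp only [trace_sum, trace_pure2_mul_pure2]
    exact_mod_cast hpot
  · rw [hFG, one_add_swapMat_mul_one_add_swapMat, trace_smul, trace_add, trace_one,
      trace_swapMat, hcard, Fintype.card_prod, smul_eq_mul]
    push_cast
    ring

end Tensor

theorem trace_symProj (I : Type*) [Fintype I] [DecidableEq I] :
    (symProj I).trace = Fintype.card I * (Fintype.card I + 1) / 2 := by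
  rw [symProj, trace_smul, trace_add, trace_one, trace_swapMat, Fintype.card_prod, smul_eq_mul]
  push_cast
  ring

section MUB

variable {d : ℕ}

theorem ip_eq_star_dotProduct (φ χ : Fin d → ℂ) : ip φ χ = star φ ⬝ᵥ χ := rfl

theorem sum_sum_norm_ip_pow_four_eq_two (B : Fin (d + 1) → Fin d → Fin d → ℂ)
    (horth : ∀ j i i', ip (B j i) (B j i') = if i = i' then 1 else 0)
    (hmub : ∀ j k, j ≠ k → ∀ i i', ‖ip (B j i) (B k i')‖ ^ 2 = 1 / (d : ℝ))
    (j : Fin (d + 1)) (i : Fin d) :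
    ∑ k, ∑ l, ‖ip (B j i) (B k l)‖ ^ 4 = 2 := by
  have hd : (d : ℝ) ≠ 0 := Nat.cast_ne_zero.mpr i.pos.ne'
  have hsame : ∑ l, ‖ip (B j i) (B j l)‖ ^ 4 = 1 := by
    simp [horth, apply_ite (fun z : ℂ => ‖z‖ ^ 4)]
  have hother : ∀ k ∈ Finset.univ.erase j, ∑ l, ‖ip (B j i) (B k l)‖ ^ 4 = 1 / d := by
    intro k hk
    simp only [show 4 = 2 * 2 from rfl, pow_mul, hmub j k (Finset.ne_of_mem_erase hk).symm,
      Finset.sum_const, Finset.card_univ, Fintype.card_fin, nsmul_eq_mul]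
    field_simp
  rw [← Finset.add_sum_erase _ _ (Finset.mem_univ j), hsame, Finset.sum_congr rfl hother,
    Finset.sum_const, Finset.card_erase_of_mem (Finset.mem_univ j), Finset.card_univ,
    Fintype.card_fin, Nat.add_sub_cancel, nsmul_eq_mul, mul_one_div_cancel hd]
  norm_num

end MUB

theorem stmt_19_general (d : ℕ)
    (B : Fin (d + 1) → Fin d → (Fin d → ℂ))
    (horth : ∀ j i i', ip (B j i) (B j i') = if i = i' then 1 else 0)
    (hmub : ∀ j k, j ≠ k → ∀ i i', ‖ip (B j i) (B k i')‖ ^ 2 = 1 / (d : ℝ)) :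
    ((2⁻¹ : ℂ) • ∑ j, ∑ i, pure2 (B j i) = symProj (Fin d)) ∧
      ((d * (d + 1) : ℂ))⁻¹ • ∑ j, ∑ i, pure2 (B j i) =
        (symProj (Fin d)).trace⁻¹ • symProj (Fin d) := by
  have hdesign : ∑ j, ∑ i, pure2 (B j i) = 1 + swapMat (Fin d) := by
    rw [← Fintype.sum_prod_type']
    refine sum_pure2_eq_one_add_swapMat _ (fun p => by simp [← ip_eq_star_dotProduct, horth])
      (by simp [mul_comm]) ?_
    simp_rw [Fintype.sum_prod_type, ← ip_eq_star_dotProduct,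
      sum_sum_norm_ip_pow_four_eq_two B horth hmub]
    simp only [Finset.sum_const, Finset.card_univ, Fintype.card_prod, nsmul_eq_mul]
    push_cast
    ring
  refine ⟨by rw [hdesign, symProj], ?_⟩
  rw [hdesign, trace_symProj, symProj, smul_smul, inv_div, Fintype.card_fin]
  congr 1
  ring

theorem stmt_19 (d : ℕ) (hd : Nat.Prime d)
    (B : Fin (d + 1) → Fin d → (Fin d → ℂ))
    (horth : ∀ j i i', ip (B j i) (B j i') = if i = i' then 1 else 0)
    (hmub : ∀ j k, j ≠ k → ∀ i i', ‖ip (B j i) (B k i')‖ ^ 2 = 1 / (d : ℝ)) :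
    ((2⁻¹ : ℂ) • ∑ j, ∑ i, pure2 (B j i) = symProj (Fin d)) ∧
      ((d * (d + 1) : ℂ))⁻¹ • ∑ j, ∑ i, pure2 (B j i) =
        (symProj (Fin d)).trace⁻¹ • symProj (Fin d) :=
  stmt_19_general d B horth hmub
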